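/- (q-analogue of the Srivastava–Pintér addition theorem, Bernoulli in terms of Euler.) For every integer n ≥ 0, every positive integer m, and all x, y ∈ ℂ: B_{n,q}(x,y) = (1/2) Σ_{k=0}^{n} [n choose k]_q m^{k−n} [ B_{k,q}(x) + Σ_{j=0}^{k} [k choose j]_q ((−1;q)_{k−j}/2^{k−j}) B_{j,q}(x) m^{−(k−j)} ] E_{n−k,q}(my), and equivalently B_{n,q}(x,y) = (1/2) Σ_{k=0}^{n} [n choose k]_q m^{k−n} [ B_{k,q}(x) + B_{k,q}(x, 1/m) ] E_{n−k,q}(my). -/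

import Mathlib

open Finset PowerSeries

/-- The `q`-number `[n]_q = (1 - q^n)/(1 - q)`. -/
noncomputable def qNum (q : ℂ) (n : ℕ) : ℂ := (1 - q ^ n) / (1 - q)

/-- The `q`-factorial `[n]_q!`. -/
noncomputable def qFact (q : ℂ) : ℕ → ℂ
  | 0 => 1
  | n + 1 => qNum q (n + 1) * qFact q n

/-- The `q`-shifted factorial `(a; q)_n = ∏_{j=0}^{n-1} (1 - q^j a)`. -/
noncomputable def qShift (a q : ℂ) (n : ℕ) : ℂ := ∏ j ∈ Finset.range n, (1 - q ^ j * a)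

/-- The Gaussian binomial coefficient `[n choose k]_q = (q;q)_n / ((q;q)_{n-k} (q;q)_k)`. -/
noncomputable def qBinom (q : ℂ) (n k : ℕ) : ℂ :=
  qShift q q n / (qShift q q (n - k) * qShift q q k)

/-- The formal power series (in `t`) `𝓔_q(tx) = Σ_{n≥0} (-1;q)_n (x)^n t^n / (2^n [n]_q!)`. -/
noncomputable def qExp (q x : ℂ) : PowerSeries ℂ :=
  PowerSeries.mk fun n => qShift (-1) q n * x ^ n / (2 ^ n * qFact q n)

/-- The generating series `Σ_{n≥0} a_n t^n / [n]_q!` of a sequence `a`. -/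
noncomputable def qGen (q : ℂ) (a : ℕ → ℂ) : PowerSeries ℂ :=
  PowerSeries.mk fun n => a n / qFact q n

/-- The `q`-addition `(x ⊕_q y)^n`. -/
noncomputable def qAdd (q x y : ℂ) (n : ℕ) : ℂ :=
  ∑ k ∈ Finset.range (n + 1),
    qBinom q n k * (qShift (-1) q k * qShift (-1) q (n - k) / 2 ^ n) * x ^ k * y ^ (n - k)

/-! Write `F(x, y)` for the generating series of `B(x, y)`. Cancelling `𝓔_q(t) - 1` in the defining
relation gives the Appell property `F(x, y) = F(x, 0) 𝓔_q(ty)`, so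
`F(x, 0) + F(x, 1/m) = F(x, 0) (1 + 𝓔_q(t/m))`. Substituting `t ↦ t/m` in the Euler relation at `my`
shows that `1 + 𝓔_q(t/m)` times the rescaled Euler series is `2 𝓔_q(ty)`; hence `2 F(x, y)` is the
product of `F(x, 0) + F(x, 1/m)` with the rescaled Euler series. A product of such series is a
`q`-binomial convolution, which yields the second formula; expanding `B(x, 1/m)` by the Appell
property yields the first. -/

section QCalculus

variable {q : ℂ}

lemma pow_ne_one_of_not_isOfFinOrder (hq : ¬IsOfFinOrder q) {k : ℕ} (hk : k ≠ 0) : q ^ k ≠ 1 :=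
  orderOf_eq_zero_iff'.1 (orderOf_eq_zero hq) k (Nat.pos_of_ne_zero hk)

lemma ne_one_of_not_isOfFinOrder (hq : ¬IsOfFinOrder q) : q ≠ 1 := by
  simpa using pow_ne_one_of_not_isOfFinOrder hq one_ne_zero

lemma qNum_ne_zero (hq : ¬IsOfFinOrder q) {k : ℕ} (hk : k ≠ 0) : qNum q k ≠ 0 := by
  have hqk := pow_ne_one_of_not_isOfFinOrder hq hk
  exact div_ne_zero (sub_ne_zero.2 hqk.symm) (sub_ne_zero.2 (ne_one_of_not_isOfFinOrder hq).symm)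

lemma qFact_ne_zero (hq : ¬IsOfFinOrder q) (n : ℕ) : qFact q n ≠ 0 := by
  induction n with
  | zero => exact one_ne_zero
  | succ k ih => exact mul_ne_zero (qNum_ne_zero hq k.succ_ne_zero) ih

lemma qFact_mul_one_sub_pow (hq : q ≠ 1) (n : ℕ) : qFact q n * (1 - q) ^ n = qShift q q n := by
  have h1q : (1 : ℂ) - q ≠ 0 := sub_ne_zero.2 hq.symm
  induction n with
  | zero => simp [qFact, qShift]
  | succ k ih =>
    rw [qShift, prod_range_succ, ← qShift, ← ih, qFact, qNum]
    field_simp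
    ring

lemma qBinom_eq_qFact_div (hq : q ≠ 1) {n k : ℕ} (hk : k ≤ n) :
    qBinom q n k = qFact q n / (qFact q k * qFact q (n - k)) := by
  have hpow : (1 - q) ^ n ≠ 0 := pow_ne_zero _ (sub_ne_zero.2 hq.symm)
  rw [qBinom, ← qFact_mul_one_sub_pow hq, ← qFact_mul_one_sub_pow hq,
    ← qFact_mul_one_sub_pow hq, ← mul_div_mul_right (qFact q n) _ hpow]
  congr 1
  rw [← Nat.sub_add_cancel hk, pow_add, Nat.add_sub_cancel]
  ring

lemma qGen_injective (hq : ¬IsOfFinOrder q) : Function.Injective (qGen q) := by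
  intro a b h
  funext n
  have hn := congrArg (coeff n) h
  simp only [qGen, coeff_mk] at hn
  exact (div_left_inj' (qFact_ne_zero hq n)).1 hn

lemma qGen_add (a b : ℕ → ℂ) : qGen q (a + b) = qGen q a + qGen q b := by
  ext n
  simp [qGen, add_div]

lemma C_mul_qGen (c : ℂ) (a : ℕ → ℂ) : C c * qGen q a = qGen q (fun n => c * a n) := by
  ext n
  simp [qGen, mul_div_assoc]

lemma rescale_qGen (r : ℂ) (a : ℕ → ℂ) : rescale r (qGen q a) = qGen q (fun n => r ^ n * a n) := by
  ext n
  simp [qGen, coeff_rescale, mul_div_assoc]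

lemma qGen_mul (hq : ¬IsOfFinOrder q) (a b : ℕ → ℂ) :
    qGen q a * qGen q b =
      qGen q (fun n => ∑ k ∈ range (n + 1), qBinom q n k * a k * b (n - k)) := by
  ext n
  rw [coeff_mul, Nat.sum_antidiagonal_eq_sum_range_succ_mk]
  simp only [qGen, coeff_mk, sum_div]
  refine sum_congr rfl fun k hk => ?_
  have := qFact_ne_zero hq k
  have := qFact_ne_zero hq (n - k)
  have := qFact_ne_zero hq n
  rw [qBinom_eq_qFact_div (ne_one_of_not_isOfFinOrder hq) (mem_range_succ_iff.1 hk)]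
  field_simp

lemma qExp_eq_qGen (z : ℂ) : qExp q z = qGen q (fun n => qShift (-1) q n * z ^ n / 2 ^ n) := by
  ext n
  simp [qExp, qGen, div_div]

lemma qExp_zero : qExp q 0 = 1 := by
  ext n
  cases n <;> simp [qExp, qShift, qFact, coeff_one]

lemma rescale_qExp (r x : ℂ) : rescale r (qExp q x) = qExp q (r * x) := by
  ext n
  simp only [qExp, rescale_mk, coeff_mk, mul_pow]
  ring

lemma qExp_one_sub_one_ne_zero (hq : q ≠ 1) : qExp q 1 - 1 ≠ 0 := by
  intro h
  have h1 := congrArg (coeff 1) h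
  simp [qExp, qShift, qFact, qNum, coeff_one, div_self (sub_ne_zero.2 hq.symm)] at h1

end QCalculus

section BernoulliEuler

variable {q : ℂ} {B E : ℂ → ℂ → ℕ → ℂ}

lemma qGen_bernoulli_eq_mul_qExp (hq : q ≠ 1)
    (hB : ∀ x y : ℂ, qGen q (B x y) * (qExp q 1 - 1) = X * qExp q x * qExp q y) (x y : ℂ) :
    qGen q (B x y) = qGen q (B x 0) * qExp q y := by
  have hB0 := hB x 0
  rw [qExp_zero, mul_one] at hB0
  refine mul_right_cancel₀ (qExp_one_sub_one_ne_zero hq) ?_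
  linear_combination hB x y - qExp q y * hB0

lemma bernoulli_eq_sum (hq : ¬IsOfFinOrder q)
    (hB : ∀ x y : ℂ, qGen q (B x y) * (qExp q 1 - 1) = X * qExp q x * qExp q y) (x y : ℂ)
    (n : ℕ) :
    B x y n = ∑ k ∈ range (n + 1),
      qBinom q n k * B x 0 k * (qShift (-1) q (n - k) * y ^ (n - k) / 2 ^ (n - k)) := by
  have h := qGen_bernoulli_eq_mul_qExp (ne_one_of_not_isOfFinOrder hq) hB x y
  rw [qExp_eq_qGen, qGen_mul hq] at h
  exact congrFun (qGen_injective hq h) n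

lemma rescale_qGen_euler_mul (hE : ∀ x y : ℂ, qGen q (E x y) * (qExp q 1 + 1) = 2 * qExp q x * qExp q y)
    {c : ℂ} (hc : c ≠ 0) (y : ℂ) :
    rescale c⁻¹ (qGen q (E (c * y) 0)) * (qExp q c⁻¹ + 1) = 2 * qExp q y := by
  have h := congrArg (rescale c⁻¹) (hE (c * y) 0)
  simp only [map_mul, map_add, map_one, map_ofNat, rescale_qExp, qExp_zero, mul_one,
    inv_mul_cancel_left₀ hc] at h
  exact h

lemma two_mul_qGen_bernoulli (hq : q ≠ 1)
    (hB : ∀ x y : ℂ, qGen q (B x y) * (qExp q 1 - 1) = X * qExp q x * qExp q y)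
    (hE : ∀ x y : ℂ, qGen q (E x y) * (qExp q 1 + 1) = 2 * qExp q x * qExp q y)
    {c : ℂ} (hc : c ≠ 0) (x y : ℂ) :
    2 * qGen q (B x y) = qGen q (B x 0 + B x c⁻¹) * rescale c⁻¹ (qGen q (E (c * y) 0)) := by
  rw [qGen_add, qGen_bernoulli_eq_mul_qExp hq hB x c⁻¹, qGen_bernoulli_eq_mul_qExp hq hB x y]
  linear_combination (-qGen q (B x 0)) * rescale_qGen_euler_mul hE hc y

lemma bernoulli_eq_half_sum (hq : ¬IsOfFinOrder q)
    (hB : ∀ x y : ℂ, qGen q (B x y) * (qExp q 1 - 1) = X * qExp q x * qExp q y)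
    (hE : ∀ x y : ℂ, qGen q (E x y) * (qExp q 1 + 1) = 2 * qExp q x * qExp q y)
    {c : ℂ} (hc : c ≠ 0) (x y : ℂ) (n : ℕ) :
    B x y n = 1 / 2 * ∑ k ∈ range (n + 1),
      qBinom q n k * (B x 0 k + B x c⁻¹ k) * (c⁻¹ ^ (n - k) * E (c * y) 0 (n - k)) := by
  have h := two_mul_qGen_bernoulli (ne_one_of_not_isOfFinOrder hq) hB hE hc x y
  rw [rescale_qGen, qGen_mul hq, show (2 : ℂ⟦X⟧) = C 2 from rfl, C_mul_qGen] at h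
  have hn := congrFun (qGen_injective hq h) n
  simp only [Pi.add_apply] at hn
  rw [← hn]
  ring

end BernoulliEuler

theorem qSrivastavaPinter_Bernoulli_Euler_general (q : ℂ)
    (hq1 : ‖q‖ < 1)
    (B E : ℂ → ℂ → ℕ → ℂ)
    (hB : ∀ x y : ℂ, qGen q (B x y) * (qExp q 1 - 1) = PowerSeries.X * qExp q x * qExp q y)
    (hE : ∀ x y : ℂ, qGen q (E x y) * (qExp q 1 + 1) = 2 * qExp q x * qExp q y)
    (n : ℕ) (m : ℕ) (hm : 0 < m) (x y : ℂ) :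
    (B x y n = (1 / 2) * ∑ k ∈ Finset.range (n + 1),
        qBinom q n k * (m : ℂ) ^ ((k : ℤ) - (n : ℤ)) *
          (B x 0 k + ∑ j ∈ Finset.range (k + 1),
            qBinom q k j * (qShift (-1) q (k - j) / 2 ^ (k - j)) * B x 0 j / (m : ℂ) ^ (k - j)) *
          E ((m : ℂ) * y) 0 (n - k)) ∧
    (B x y n = (1 / 2) * ∑ k ∈ Finset.range (n + 1),
        qBinom q n k * (m : ℂ) ^ ((k : ℤ) - (n : ℤ)) *
          (B x 0 k + B x (1 / (m : ℂ)) k) * E ((m : ℂ) * y) 0 (n - k)) := by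
  have hq : ¬IsOfFinOrder q := fun h => hq1.ne h.norm_eq_one
  have hm0 : (m : ℂ) ≠ 0 := Nat.cast_ne_zero.2 hm.ne'
  have hpow : ∀ k ∈ range (n + 1), (m : ℂ) ^ ((k : ℤ) - (n : ℤ)) = (m : ℂ)⁻¹ ^ (n - k) := by
    intro k hk
    rw [inv_pow, ← zpow_natCast, ← zpow_neg, Nat.cast_sub (mem_range_succ_iff.1 hk), neg_sub]
  have hexpand : ∀ k, ∑ j ∈ range (k + 1), qBinom q k j * (qShift (-1) q (k - j) / 2 ^ (k - j)) *
      B x 0 j / (m : ℂ) ^ (k - j) = B x (1 / (m : ℂ)) k := by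
    intro k
    rw [bernoulli_eq_sum hq hB x (1 / (m : ℂ)) k]
    refine sum_congr rfl fun j _ => ?_
    rw [one_div_pow]
    ring
  have haddition : B x y n = (1 / 2) * ∑ k ∈ Finset.range (n + 1),
      qBinom q n k * (m : ℂ) ^ ((k : ℤ) - (n : ℤ)) *
        (B x 0 k + B x (1 / (m : ℂ)) k) * E ((m : ℂ) * y) 0 (n - k) := by
    rw [bernoulli_eq_half_sum hq hB hE hm0, one_div (m : ℂ)]
    congr 1
    refine sum_congr rfl fun k hk => ?_
    rw [hpow k hk]
    ring
  simp only [hexpand]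
  exact ⟨haddition, haddition⟩

/-- `q`-analogue of the Srivastava–Pintér addition theorem: the `q`-Bernoulli polynomials in
terms of the `q`-Euler polynomials. -/
theorem qSrivastavaPinter_Bernoulli_Euler (q : ℂ)
    (hq0 : 0 < ‖q‖) (hq1 : ‖q‖ < 1)
    (B E : ℂ → ℂ → ℕ → ℂ)
    (hB : ∀ x y : ℂ, qGen q (B x y) * (qExp q 1 - 1) = PowerSeries.X * qExp q x * qExp q y)
    (hE : ∀ x y : ℂ, qGen q (E x y) * (qExp q 1 + 1) = 2 * qExp q x * qExp q y)
    (n : ℕ) (m : ℕ) (hm : 0 < m) (x y : ℂ) :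
    (B x y n = (1 / 2) * ∑ k ∈ Finset.range (n + 1),
        qBinom q n k * (m : ℂ) ^ ((k : ℤ) - (n : ℤ)) *
          (B x 0 k + ∑ j ∈ Finset.range (k + 1),
            qBinom q k j * (qShift (-1) q (k - j) / 2 ^ (k - j)) * B x 0 j / (m : ℂ) ^ (k - j)) *
          E ((m : ℂ) * y) 0 (n - k)) ∧
    (B x y n = (1 / 2) * ∑ k ∈ Finset.range (n + 1),
        qBinom q n k * (m : ℂ) ^ ((k : ℤ) - (n : ℤ)) *
          (B x 0 k + B x (1 / (m : ℂ)) k) * E ((m : ℂ) * y) 0 (n - k)) :=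
  qSrivastavaPinter_Bernoulli_Euler_general q hq1 B E hB hE n m hm x y
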